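/- Let (E,z) be a gradient pair for H ∈ C¹(X,ℝ) on an open set X ⊆ ℝⁿ, and suppose there exist an open set X̃ ⊆ ℝⁿ, a diffeomorphism φ ∈ C¹(X̃,X), and a continuous pointwise invertible U : X̃ → ℝ^{n×n} such that the transformed pair (Uᵀ(E∘φ)Dφ, U^{-1}(z∘φ)) is a semi-explicit gradient pair for H∘φ. Then there exists a discrete gradient pair for (H,E,z). -/

import Mathlib

open Matrix Set

/-- The standard basis vectors of `ℝ^{n₁} × ℝ^{n₂}`, indexed by `Fin n₁ ⊕ Fin n₂`. -/
def basisP {n1 n2 : ℕ} (j : Fin n1 ⊕ Fin n2) : (Fin n1 → ℝ) × (Fin n2 → ℝ) :=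
  Sum.elim (fun j1 => (Pi.single j1 1, 0)) (fun j2 => (0, Pi.single j2 1)) j

/-- The gradient of a scalar function on `ℝ^{n₁} × ℝ^{n₂}` as a vector indexed by
`Fin n₁ ⊕ Fin n₂`. -/
noncomputable def gradP {n1 n2 : ℕ} (f : ((Fin n1 → ℝ) × (Fin n2 → ℝ)) → ℝ)
    (x : (Fin n1 → ℝ) × (Fin n2 → ℝ)) : Fin n1 ⊕ Fin n2 → ℝ :=
  fun i => fderiv ℝ f x (basisP i)

/-- The Jacobian matrix of a map on `ℝ^{n₁} × ℝ^{n₂}`. -/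
noncomputable def jacP {n1 n2 : ℕ}
    (f : ((Fin n1 → ℝ) × (Fin n2 → ℝ)) → ((Fin n1 → ℝ) × (Fin n2 → ℝ)))
    (x : (Fin n1 → ℝ) × (Fin n2 → ℝ)) :
    Matrix (Fin n1 ⊕ Fin n2) (Fin n1 ⊕ Fin n2) ℝ :=
  Matrix.of fun i j =>
    Sum.elim (fderiv ℝ f x (basisP j)).1 (fderiv ℝ f x (basisP j)).2 i

def IsDiscreteGradientPairProd {n1 n2 : ℕ} (X : Set ((Fin n1 → ℝ) × (Fin n2 → ℝ)))
    (H : ((Fin n1 → ℝ) × (Fin n2 → ℝ)) → ℝ)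
    (E : ((Fin n1 → ℝ) × (Fin n2 → ℝ)) → Matrix (Fin n1 ⊕ Fin n2) (Fin n1 ⊕ Fin n2) ℝ)
    (z : ((Fin n1 → ℝ) × (Fin n2 → ℝ)) → (Fin n1 ⊕ Fin n2 → ℝ))
    (Ebar : ((Fin n1 → ℝ) × (Fin n2 → ℝ)) → ((Fin n1 → ℝ) × (Fin n2 → ℝ)) →
      Matrix (Fin n1 ⊕ Fin n2) (Fin n1 ⊕ Fin n2) ℝ)
    (zbar : ((Fin n1 → ℝ) × (Fin n2 → ℝ)) → ((Fin n1 → ℝ) × (Fin n2 → ℝ)) →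
      (Fin n1 ⊕ Fin n2 → ℝ)) : Prop :=
  ContinuousOn (fun p : ((Fin n1 → ℝ) × (Fin n2 → ℝ)) × ((Fin n1 → ℝ) × (Fin n2 → ℝ)) =>
    Ebar p.1 p.2) (X ×ˢ X) ∧
  ContinuousOn (fun p : ((Fin n1 → ℝ) × (Fin n2 → ℝ)) × ((Fin n1 → ℝ) × (Fin n2 → ℝ)) =>
    zbar p.1 p.2) (X ×ˢ X) ∧
  (∀ x ∈ X, ∀ x' ∈ X,
    zbar x x' ⬝ᵥ (Ebar x x').mulVec (Sum.elim (x'.1 - x.1) (x'.2 - x.2)) = H x' - H x) ∧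
  (∀ x ∈ X, Ebar x x = E x) ∧
  (∀ x ∈ X, zbar x x = z x)

/-!
In the coordinates `x̃ = ψ x` the pair `(diag(E₁₁, 0), z̃)` is a gradient pair for `H ∘ φ`, so
`∇(H ∘ φ) = (E₁₁ᵀ z̃₁, 0)`. As `X̃₂` is convex, `H ∘ φ` depends on `x̃₁` only, and then
`Ē = diag(E₁₁, 0)`, `z̄ = (E₁₁⁻ᵀ ḡ, z̃₂)` is a discrete gradient pair for every discrete gradient
`ḡ` of `H ∘ φ` in the variable `x̃₁`. It is carried back to `X` by
`Ē(x, x') = U⁻ᵀ Ē(ψ x, ψ x') ψ̄(x, x')` and `z̄(x, x') = U z̄(ψ x, ψ x')`, with `U` taken at `ψ x`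
and `ψ̄` a discrete Jacobian of `ψ`: `ψ̄(x, x') (x' - x) = ψ x' - ψ x` and `ψ̄(x, x) = Dψ(x)`.

Both `ḡ` and the rows of `ψ̄` come from Gonzalez's construction `g + (t - g ⬝ d) / (d ⬝ d) • d`.
It is continuous across the diagonal `d = 0` because the first-order remainder of a `C¹` map is
`o(x' - x)` as `(x, x')` tends to a point of the diagonal.
-/

open Filter Topology Asymptotics

namespace Matrix

variable {n R : Type*} [Fintype n] [DecidableEq n] [CommRing R]

lemma inv_transpose_mulVec_dotProduct_mulVec {A : Matrix n n R} (hA : IsUnit A.det)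
    (u w : n → R) : ((Aᵀ)⁻¹ *ᵥ u) ⬝ᵥ (A *ᵥ w) = u ⬝ᵥ w := by
  rw [dotProduct_mulVec, ← mulVec_transpose, mulVec_mulVec,
    mul_nonsing_inv _ (by rwa [det_transpose]), one_mulVec]

lemma transpose_mul_mulVec_inv_mulVec {U : Matrix n n R} (hU : IsUnit U.det) (E J : Matrix n n R)
    (z : n → R) : (Uᵀ * E * J)ᵀ *ᵥ (U⁻¹ *ᵥ z) = Jᵀ *ᵥ (Eᵀ *ᵥ z) := by
  rw [transpose_mul, transpose_mul, transpose_transpose, ← mulVec_mulVec, ← mulVec_mulVec,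
    mulVec_mulVec (M := U), mul_nonsing_inv _ hU, one_mulVec]

end Matrix

theorem ContinuousOn.matrix_inv {α n : Type*} [TopologicalSpace α] [Fintype n] [DecidableEq n]
    {s : Set α} {f : α → Matrix n n ℝ} (hf : ContinuousOn f s)
    (hdet : ∀ x ∈ s, IsUnit (f x).det) : ContinuousOn (fun x => (f x)⁻¹) s := by
  intro x hx
  have hinv : ContinuousAt Ring.inverse (f x).det := by
    rw [Ring.inverse_eq_inv']
    exact continuousAt_inv₀ (hdet x hx).ne_zero
  exact (continuousAt_matrix_inv _ hinv).comp_continuousWithinAt (hf x hx)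

lemma norm_sumElim {α β E : Type*} [Fintype α] [Fintype β] [SeminormedAddCommGroup E]
    (a : α → E) (b : β → E) : ‖Sum.elim a b‖ = ‖(a, b)‖ := by
  refine le_antisymm ((pi_norm_le_iff_of_nonneg (norm_nonneg _)).2 ?_) (max_le ?_ ?_)
  · rintro (i | i)
    · exact (norm_le_pi_norm a i).trans (norm_fst_le (a, b))
    · exact (norm_le_pi_norm b i).trans (norm_snd_le (a, b))
  · exact (pi_norm_le_iff_of_nonneg (norm_nonneg _)).2 fun i =>
      norm_le_pi_norm (Sum.elim a b) (Sum.inl i)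
  · exact (pi_norm_le_iff_of_nonneg (norm_nonneg _)).2 fun i =>
      norm_le_pi_norm (Sum.elim a b) (Sum.inr i)

theorem ContDiffAt.isLittleO_sub_sub_fderiv {V W : Type*} [NormedAddCommGroup V]
    [NormedSpace ℝ V] [NormedAddCommGroup W] [NormedSpace ℝ W] {f : V → W} {x : V}
    (hf : ContDiffAt ℝ 1 f x) :
    (fun p : V × V => f p.2 - f p.1 - fderiv ℝ f p.1 (p.2 - p.1)) =o[𝓝 (x, x)]
      fun p => p.2 - p.1 := by
  have hstrict : (fun p : V × V => f p.2 - f p.1 - fderiv ℝ f x (p.2 - p.1)) =o[𝓝 (x, x)]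
      fun p => p.2 - p.1 := by
    refine (hf.hasStrictFDerivAt one_ne_zero).isLittleO.neg_left.neg_right.congr
      (fun p => ?_) fun p => neg_sub _ _
    simp only [map_sub]
    abel
  have hDf : Tendsto (fun p : V × V => fderiv ℝ f x - fderiv ℝ f p.1) (𝓝 (x, x)) (𝓝 0) := by
    simpa using (tendsto_const_nhds (x := fderiv ℝ f x)).sub
      ((hf.continuousAt_fderiv one_ne_zero).tendsto.comp (continuous_fst.tendsto (x, x)))
  have hvar : (fun p : V × V => (fderiv ℝ f x - fderiv ℝ f p.1) (p.2 - p.1)) =o[𝓝 (x, x)]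
      fun p => p.2 - p.1 := by
    refine isLittleO_iff.2 fun c hc => ?_
    filter_upwards [hDf.eventually (Metric.closedBall_mem_nhds 0 hc)] with p hp
    exact ((fderiv ℝ f x - fderiv ℝ f p.1).le_opNorm _).trans (by gcongr; simpa using hp)
  refine (hstrict.add hvar).congr_left fun p => ?_
  simp only [_root_.sub_apply]
  abel

theorem Convex.apply_mk_eq_of_fderiv_inr_eq_zero {V W F : Type*} [NormedAddCommGroup V]
    [NormedSpace ℝ V] [NormedAddCommGroup W] [NormedSpace ℝ W] [NormedAddCommGroup F]
    [NormedSpace ℝ F] {f : V × W → F} {a : V} {B : Set W} (hB : Convex ℝ B)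
    (hf : ∀ c ∈ B, DifferentiableAt ℝ f (a, c)) (h0 : ∀ c ∈ B, ∀ w, fderiv ℝ f (a, c) (0, w) = 0)
    {b b' : W} (hb : b ∈ B) (hb' : b' ∈ B) : f (a, b) = f (a, b') := by
  have hderiv : ∀ c ∈ B, HasFDerivWithinAt (fun c => f (a, c)) (0 : W →L[ℝ] F) B c := by
    intro c hc
    have := (hf c hc).hasFDerivAt.comp c (hasFDerivAt_prodMk_right a c)
    refine this.hasFDerivWithinAt.congr_fderiv ?_
    ext w
    simpa using h0 c hc w
  have := hB.norm_image_sub_le_of_norm_hasFDerivWithin_le (C := 0) hderiv (by simp) hb hb'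
  exact (sub_eq_zero.1 (norm_le_zero_iff.1 (by simpa using this))).symm

section Secant

variable {ι : Type*} [Fintype ι]

/-- Gonzalez's discrete gradient. -/
noncomputable def secantGrad (g : ι → ℝ) (t : ℝ) (d : ι → ℝ) : ι → ℝ :=
  g + ((t - g ⬝ᵥ d) / (d ⬝ᵥ d)) • d

lemma secantGrad_zero (g : ι → ℝ) (t : ℝ) : secantGrad g t 0 = g := by
  simp [secantGrad]

lemma secantGrad_dotProduct {g d : ι → ℝ} {t : ℝ} (ht : d = 0 → t = 0) :
    secantGrad g t d ⬝ᵥ d = t := by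
  by_cases hd : d = 0
  · simp [hd, ht hd]
  · have hdd : d ⬝ᵥ d ≠ 0 := by rwa [Ne, dotProduct_self_eq_zero]
    rw [secantGrad, add_dotProduct, smul_dotProduct, smul_eq_mul, div_mul_cancel₀ _ hdd]
    ring

lemma sq_norm_le_dotProduct_self (d : ι → ℝ) : ‖d‖ ^ 2 ≤ d ⬝ᵥ d := by
  have hnorm : ‖d‖ ≤ √(d ⬝ᵥ d) := (pi_norm_le_iff_of_nonneg (Real.sqrt_nonneg _)).2 fun i => by
    refine Real.abs_le_sqrt ?_
    rw [sq]
    exact Finset.single_le_sum (f := fun j => d j * d j) (fun j _ => mul_self_nonneg (d j))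
      (Finset.mem_univ i)
  calc ‖d‖ ^ 2 ≤ √(d ⬝ᵥ d) ^ 2 := by gcongr
    _ = d ⬝ᵥ d := Real.sq_sqrt (by simpa using dotProduct_self_star_nonneg d)

lemma norm_div_dotProduct_self_smul_le (r : ℝ) (d : ι → ℝ) :
    ‖(r / (d ⬝ᵥ d)) • d‖ ≤ |r| / ‖d‖ := by
  rcases eq_or_ne d 0 with rfl | hd
  · simp
  have hdd : 0 ≤ d ⬝ᵥ d := (sq_nonneg ‖d‖).trans (sq_norm_le_dotProduct_self d)
  calc ‖(r / (d ⬝ᵥ d)) • d‖ = |r| / (d ⬝ᵥ d) * ‖d‖ := by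
        rw [norm_smul, Real.norm_eq_abs, abs_div, abs_of_nonneg hdd]
    _ ≤ |r| / ‖d‖ ^ 2 * ‖d‖ := by gcongr; exact sq_norm_le_dotProduct_self d
    _ = |r| / ‖d‖ := by field_simp

theorem ContinuousOn.secantGrad {α : Type*} [TopologicalSpace α] {s : Set α}
    {g d : α → ι → ℝ} {t : α → ℝ} (hg : ContinuousOn g s) (ht : ContinuousOn t s)
    (hd : ContinuousOn d s)
    (hrem : ∀ p ∈ s, d p = 0 → (fun a => t a - g a ⬝ᵥ d a) =o[𝓝[s] p] d) :
    ContinuousOn (fun a => secantGrad (g a) (t a) (d a)) s := by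
  intro p hp
  refine (hg p hp).add ?_
  by_cases hdp : d p = 0
  · have hlim : Tendsto (fun a => |t a - g a ⬝ᵥ d a| / ‖d a‖) (𝓝[s] p) (𝓝 0) := by
      simpa [abs_div] using ((hrem p hp hdp).norm_right.tendsto_div_nhds_zero).abs
    rw [ContinuousWithinAt, hdp, smul_zero]
    exact squeeze_zero_norm (fun a => norm_div_dotProduct_self_smul_le _ _) hlim
  · have hdd : d p ⬝ᵥ d p ≠ 0 := by rwa [Ne, dotProduct_self_eq_zero]
    have hdot : ∀ {u v : α → ι → ℝ}, ContinuousWithinAt u s p → ContinuousWithinAt v s p →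
        ContinuousWithinAt (fun a => u a ⬝ᵥ v a) s p := fun hu hv =>
      (continuous_fst.dotProduct continuous_snd).continuousAt.comp_continuousWithinAt
        (hu.prodMk hv)
    exact (((ht p hp).sub (hdot (hg p hp) (hd p hp))).div (hdot (hd p hp) (hd p hp)) hdd).smul
      (hd p hp)

end Secant

section Coordinates

variable {n1 n2 : ℕ}

local notation "𝔼" => (Fin n1 → ℝ) × (Fin n2 → ℝ)

def flatP : 𝔼 ≃ₗᵢ[ℝ] (Fin n1 ⊕ Fin n2 → ℝ) where
  toLinearEquiv := (LinearEquiv.sumArrowLequivProdArrow (Fin n1) (Fin n2) ℝ ℝ).symm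
  norm_map' v := norm_sumElim v.1 v.2

lemma flatP_apply (v : 𝔼) : flatP v = Sum.elim v.1 v.2 := rfl

lemma flatP_basisP (j : Fin n1 ⊕ Fin n2) : flatP (basisP j) = Pi.single j 1 := by
  ext (i | i) <;> rcases j with j | j <;> simp [flatP_apply, basisP, Pi.single_apply]

lemma jacP_eq_toMatrix' (f : 𝔼 → 𝔼) (x : 𝔼) :
    jacP f x = LinearMap.toMatrix'
      (flatP.toLinearMap ∘ₗ (fderiv ℝ f x).toLinearMap ∘ₗ flatP.symm.toLinearMap) := by
  ext i j
  rw [LinearMap.toMatrix'_apply, ← flatP_basisP]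
  rfl

lemma jacP_mulVec (f : 𝔼 → 𝔼) (x v : 𝔼) : jacP f x *ᵥ flatP v = flatP (fderiv ℝ f x v) := by
  simp [jacP_eq_toMatrix', LinearMap.toMatrix'_mulVec]

lemma jacP_comp {f g : 𝔼 → 𝔼} {x : 𝔼} (hf : DifferentiableAt ℝ f (g x))
    (hg : DifferentiableAt ℝ g x) : jacP (f ∘ g) x = jacP f (g x) * jacP g x := by
  rw [jacP_eq_toMatrix', jacP_eq_toMatrix', jacP_eq_toMatrix', ← LinearMap.toMatrix'_comp,
    fderiv_comp x hf hg]
  rfl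

lemma jacP_id (x : 𝔼) : jacP id x = 1 := by
  rw [jacP_eq_toMatrix', fderiv_id]
  convert LinearMap.toMatrix'_id
  ext v : 1
  simp

lemma continuousOn_jacP {f : 𝔼 → 𝔼} {X : Set 𝔼} (hX : IsOpen X) (hf : ContDiffOn ℝ 1 f X) :
    ContinuousOn (jacP f) X := by
  have hDf := hf.continuousOn_fderiv_of_isOpen hX le_rfl
  refine continuousOn_pi.2 fun i => continuousOn_pi.2 fun j => ?_
  exact (continuous_apply i).comp_continuousOn (flatP.continuous.comp_continuousOn
    ((ContinuousLinearMap.apply ℝ 𝔼 (basisP j)).continuous.comp_continuousOn hDf))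

lemma fderiv_apply_eq_gradP_dotProduct (f : 𝔼 → ℝ) (x v : 𝔼) :
    fderiv ℝ f x v = gradP f x ⬝ᵥ flatP v := by
  conv_lhs => rw [← flatP.symm_apply_apply v, pi_eq_sum_univ' (flatP v)]
  simp [map_sum, dotProduct, gradP, ← flatP_basisP, mul_comm]

lemma gradP_comp {H : 𝔼 → ℝ} {φ : 𝔼 → 𝔼} {y : 𝔼} (hH : DifferentiableAt ℝ H (φ y))
    (hφ : DifferentiableAt ℝ φ y) : gradP (H ∘ φ) y = (jacP φ y)ᵀ *ᵥ gradP H (φ y) := by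
  ext j
  rw [gradP, fderiv_comp y hH hφ, ContinuousLinearMap.comp_apply,
    fderiv_apply_eq_gradP_dotProduct, ← jacP_mulVec, flatP_basisP, mulVec_single_one,
    dotProduct_comm]
  rfl

lemma jacP_mul_jacP_of_leftInvOn {φ ψ : 𝔼 → 𝔼} {X : Set 𝔼} (hX : IsOpen X)
    (hφψ : LeftInvOn φ ψ X) {x : 𝔼} (hx : x ∈ X) (hφ : DifferentiableAt ℝ φ (ψ x))
    (hψ : DifferentiableAt ℝ ψ x) : jacP φ (ψ x) * jacP ψ x = 1 := by
  have hid : φ ∘ ψ =ᶠ[𝓝 x] id := eventuallyEq_of_mem (hX.mem_nhds hx) hφψ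
  rw [← jacP_comp hφ hψ, ← jacP_id x]
  simp only [jacP, hid.fderiv_eq]

end Coordinates

section DiscreteGradients

variable {n1 n2 : ℕ}

local notation "𝔼" => (Fin n1 → ℝ) × (Fin n2 → ℝ)

noncomputable def discreteJacP (ψ : 𝔼 → 𝔼) (x x' : 𝔼) :
    Matrix (Fin n1 ⊕ Fin n2) (Fin n1 ⊕ Fin n2) ℝ :=
  Matrix.of fun i => secantGrad (jacP ψ x i) (flatP (ψ x' - ψ x) i) (flatP (x' - x))

lemma discreteJacP_self (ψ : 𝔼 → 𝔼) (x : 𝔼) : discreteJacP ψ x x = jacP ψ x := by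
  ext i j
  simp [discreteJacP, secantGrad_zero]

lemma discreteJacP_mulVec (ψ : 𝔼 → 𝔼) (x x' : 𝔼) :
    discreteJacP ψ x x' *ᵥ flatP (x' - x) = flatP (ψ x' - ψ x) := by
  ext i
  refine secantGrad_dotProduct fun h => ?_
  rw [sub_eq_zero.1 (flatP.map_eq_zero_iff.1 h)]
  simp

lemma continuousOn_discreteJacP {ψ : 𝔼 → 𝔼} {X : Set 𝔼} (hX : IsOpen X)
    (hψ : ContDiffOn ℝ 1 ψ X) :
    ContinuousOn (fun p : 𝔼 × 𝔼 => discreteJacP ψ p.1 p.2) (X ×ˢ X) := by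
  have hjac := (continuousOn_jacP hX hψ).comp continuousOn_fst fun p (hp : p ∈ X ×ˢ X) => hp.1
  have hψ₁ := hψ.continuousOn.comp continuousOn_fst fun p (hp : p ∈ X ×ˢ X) => hp.1
  have hψ₂ := hψ.continuousOn.comp continuousOn_snd fun p (hp : p ∈ X ×ˢ X) => hp.2
  refine continuousOn_pi.2 fun i => ContinuousOn.secantGrad ?_ ?_ ?_ ?_
  · exact continuousOn_pi.2 fun j => (continuous_apply j).comp_continuousOn
      ((continuous_apply i).comp_continuousOn hjac)
  · exact (continuous_apply i).comp_continuousOn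
      (flatP.continuous.comp_continuousOn (hψ₂.sub hψ₁))
  · exact (flatP.continuous.comp (continuous_snd.sub continuous_fst)).continuousOn
  rintro ⟨x, x'⟩ ⟨hx, -⟩ hd
  obtain rfl : x = x' := (sub_eq_zero.1 (flatP.map_eq_zero_iff.1 hd)).symm
  have hrem : (fun p : 𝔼 × 𝔼 => ψ p.2 - ψ p.1 - fderiv ℝ ψ p.1 (p.2 - p.1))
      =o[𝓝[X ×ˢ X] (x, x)] fun p => p.2 - p.1 :=
    (hψ.contDiffAt (hX.mem_nhds hx)).isLittleO_sub_sub_fderiv.mono nhdsWithin_le_nhds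
  have hrow : ∀ p : 𝔼 × 𝔼, flatP (ψ p.2 - ψ p.1) i - jacP ψ p.1 i ⬝ᵥ flatP (p.2 - p.1)
      = flatP (ψ p.2 - ψ p.1 - fderiv ℝ ψ p.1 (p.2 - p.1)) i := fun p => by
    rw [LinearIsometryEquiv.map_sub flatP (ψ p.2 - ψ p.1), ← jacP_mulVec]
    rfl
  refine (isBigO_of_le _ fun p => ?_).trans_isLittleO
    (hrem.trans_isBigO (isBigO_of_le _ fun p => (flatP.norm_map _).ge))
  rw [hrow]
  exact (norm_le_pi_norm _ i).trans_eq (flatP.norm_map _)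

noncomputable def discreteGradFst (H : 𝔼 → ℝ) (G : 𝔼 → Fin n1 → ℝ) (y y' : 𝔼) : Fin n1 → ℝ :=
  secantGrad (G y) (H (y'.1, y.2) - H y) (y'.1 - y.1)

lemma discreteGradFst_self (H : 𝔼 → ℝ) (G : 𝔼 → Fin n1 → ℝ) (y : 𝔼) :
    discreteGradFst H G y y = G y := by
  simp [discreteGradFst, secantGrad_zero]

lemma discreteGradFst_dotProduct (H : 𝔼 → ℝ) (G : 𝔼 → Fin n1 → ℝ) (y y' : 𝔼) :
    discreteGradFst H G y y' ⬝ᵥ (y'.1 - y.1) = H (y'.1, y.2) - H y :=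
  secantGrad_dotProduct fun h => by rw [sub_eq_zero.1 h, sub_self]

lemma continuousOn_discreteGradFst {A : Set (Fin n1 → ℝ)} {B : Set (Fin n2 → ℝ)} (hA : IsOpen A)
    (hB : IsOpen B) {H : 𝔼 → ℝ} (hH : ContDiffOn ℝ 1 H (A ×ˢ B)) {G : 𝔼 → Fin n1 → ℝ}
    (hG : ContinuousOn G (A ×ˢ B)) (hHG : ∀ y ∈ A ×ˢ B, ∀ w, fderiv ℝ H y (w, 0) = G y ⬝ᵥ w) :
    ContinuousOn (fun p : 𝔼 × 𝔼 => discreteGradFst H G p.1 p.2) ((A ×ˢ B) ×ˢ (A ×ˢ B)) := by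
  have hmix : Continuous fun p : 𝔼 × 𝔼 => (p.1, ((p.2.1, p.1.2) : 𝔼)) := by fun_prop
  have hH₁ := hH.continuousOn.comp continuousOn_fst fun p (hp : p ∈ (A ×ˢ B) ×ˢ (A ×ˢ B)) => hp.1
  have hH₂ := hH.continuousOn.comp (continuous_snd.comp hmix).continuousOn
    fun p (hp : p ∈ (A ×ˢ B) ×ˢ (A ×ˢ B)) => (⟨hp.2.1, hp.1.2⟩ : (p.2.1, p.1.2) ∈ A ×ˢ B)
  refine ContinuousOn.secantGrad (hG.comp continuousOn_fst fun p hp => hp.1) (hH₂.sub hH₁)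
    (by fun_prop) ?_
  rintro ⟨y, y'⟩ ⟨hy, -⟩ hd
  have hlim : Tendsto (fun p : 𝔼 × 𝔼 => (p.1, ((p.2.1, p.1.2) : 𝔼)))
      (𝓝[(A ×ˢ B) ×ˢ (A ×ˢ B)] (y, y')) (𝓝 (y, y)) := by
    have hy' : ((y, ((y'.1, y.2) : 𝔼)) : 𝔼 × 𝔼) = (y, y) := by rw [sub_eq_zero.1 hd]
    rw [← hy']
    exact hmix.continuousWithinAt
  have hrem :=
    (hH.contDiffAt ((hA.prod hB).mem_nhds hy)).isLittleO_sub_sub_fderiv.comp_tendsto hlim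
  have hsub : ∀ p : 𝔼 × 𝔼, ((p.2.1, p.1.2) : 𝔼) - p.1 = (p.2.1 - p.1.1, 0) :=
    fun p => Prod.ext rfl (sub_self _)
  refine (hrem.trans_isBigO (isBigO_of_le _ fun p => ?_)).congr' ?_ EventuallyEq.rfl
  · simp [hsub, Prod.norm_def]
  · filter_upwards [self_mem_nhdsWithin] with p hp
    simp only [Function.comp_apply, hsub, hHG p.1 hp.1]

lemma fderiv_apply_eq_of_gradP_eq_fromBlocks {H : 𝔼 → ℝ} {y : 𝔼}
    {E₁₁ : Matrix (Fin n1) (Fin n1) ℝ} {w : Fin n1 ⊕ Fin n2 → ℝ}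
    (hgrad : (fromBlocks E₁₁ 0 0 0)ᵀ *ᵥ w = gradP H y) (v : 𝔼) :
    fderiv ℝ H y v = E₁₁ᵀ *ᵥ (w ∘ Sum.inl) ⬝ᵥ v.1 := by
  rw [fderiv_apply_eq_gradP_dotProduct, ← hgrad, fromBlocks_transpose, fromBlocks_mulVec,
    flatP_apply, sumElim_dotProduct_sumElim]
  simp

theorem exists_isDiscreteGradientPairProd_of_semiExplicit {A : Set (Fin n1 → ℝ)}
    {B : Set (Fin n2 → ℝ)} (hA : IsOpen A) (hB : IsOpen B) (hBconv : Convex ℝ B) {H : 𝔼 → ℝ}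
    (hH : ContDiffOn ℝ 1 H (A ×ˢ B)) {E₁₁ : 𝔼 → Matrix (Fin n1) (Fin n1) ℝ}
    (hE₁₁ : ContinuousOn E₁₁ (A ×ˢ B)) (hE₁₁inv : ∀ y ∈ A ×ˢ B, IsUnit (E₁₁ y).det)
    {z : 𝔼 → Fin n1 ⊕ Fin n2 → ℝ} (hz : ContinuousOn z (A ×ˢ B))
    (hgrad : ∀ y ∈ A ×ˢ B, (fromBlocks (E₁₁ y) 0 0 0)ᵀ *ᵥ z y = gradP H y) :
    ∃ Ebar zbar, IsDiscreteGradientPairProd (A ×ˢ B) H (fun y => fromBlocks (E₁₁ y) 0 0 0) z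
      Ebar zbar := by
  set G : 𝔼 → Fin n1 → ℝ := fun y => (E₁₁ y)ᵀ *ᵥ (z y ∘ Sum.inl) with hG
  have hderiv : ∀ y ∈ A ×ˢ B, ∀ v : 𝔼, fderiv ℝ H y v = G y ⬝ᵥ v.1 := fun y hy =>
    fderiv_apply_eq_of_gradP_eq_fromBlocks (hgrad y hy)
  have hindep : ∀ y ∈ A ×ˢ B, ∀ c ∈ B, H (y.1, c) = H (y.1, y.2) := fun y hy c hc =>
    hBconv.apply_mk_eq_of_fderiv_inr_eq_zero
      (fun c' hc' => (hH.contDiffAt ((hA.prod hB).mem_nhds (show (y.1, c') ∈ A ×ˢ B from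
        ⟨hy.1, hc'⟩))).differentiableAt one_ne_zero)
      (fun c' hc' w => by simp [hderiv (y.1, c') ⟨hy.1, hc'⟩]) hc hy.2
  have hE₁₁inv' : ∀ y ∈ A ×ˢ B, IsUnit (E₁₁ y)ᵀ.det := fun y hy => by
    simpa using hE₁₁inv y hy
  have hGc : ContinuousOn G (A ×ˢ B) := by fun_prop
  have hgc := continuousOn_discreteGradFst hA hB hH hGc fun y hy w => hderiv y hy (w, 0)
  have hE₁₁fst : ContinuousOn (fun p : 𝔼 × 𝔼 => E₁₁ p.1) ((A ×ˢ B) ×ˢ (A ×ˢ B)) :=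
    hE₁₁.comp continuousOn_fst fun p hp => hp.1
  have hzfst : ContinuousOn (fun p : 𝔼 × 𝔼 => z p.1) ((A ×ˢ B) ×ˢ (A ×ˢ B)) :=
    hz.comp continuousOn_fst fun p hp => hp.1
  have hinv : ContinuousOn (fun p : 𝔼 × 𝔼 => ((E₁₁ p.1)ᵀ)⁻¹) ((A ×ˢ B) ×ˢ (A ×ˢ B)) :=
    (continuous_id.matrix_transpose.comp_continuousOn hE₁₁fst).matrix_inv fun p hp =>
      hE₁₁inv' p.1 hp.1
  refine ⟨fun y _ => fromBlocks (E₁₁ y) 0 0 0,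
    fun y y' => Sum.elim (((E₁₁ y)ᵀ)⁻¹ *ᵥ discreteGradFst H G y y') (z y ∘ Sum.inr),
    ?_, ?_, ?_, fun _ _ => rfl, ?_⟩
  · exact (continuous_id.matrix_fromBlocks continuous_const continuous_const
      continuous_const).comp_continuousOn hE₁₁fst
  · exact flatP.continuous.comp_continuousOn
      (((continuous_fst.matrix_mulVec continuous_snd).comp_continuousOn (hinv.prodMk hgc)).prodMk
        (continuousOn_pi.2 fun i => (continuous_apply (Sum.inr i)).comp_continuousOn hzfst))
  · intro y hy y' hy'
    calc (Sum.elim (((E₁₁ y)ᵀ)⁻¹ *ᵥ discreteGradFst H G y y') (z y ∘ Sum.inr)) ⬝ᵥ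
          (fromBlocks (E₁₁ y) 0 0 0 *ᵥ Sum.elim (y'.1 - y.1) (y'.2 - y.2))
        = (((E₁₁ y)ᵀ)⁻¹ *ᵥ discreteGradFst H G y y') ⬝ᵥ (E₁₁ y *ᵥ (y'.1 - y.1)) := by
          simp [fromBlocks_mulVec, sumElim_dotProduct_sumElim]
      _ = discreteGradFst H G y y' ⬝ᵥ (y'.1 - y.1) :=
          inv_transpose_mulVec_dotProduct_mulVec (hE₁₁inv y hy) _ _
      _ = H y' - H y := by rw [discreteGradFst_dotProduct, hindep y' hy' y.2 hy.2]
  · intro y hy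
    dsimp only
    rw [discreteGradFst_self, hG, mulVec_mulVec, nonsing_inv_mul _ (hE₁₁inv' y hy), one_mulVec]
    exact Sum.elim_comp_inl_inr (z y)

theorem IsDiscreteGradientPairProd.of_transform {X Y : Set 𝔼} (hX : IsOpen X) {H : 𝔼 → ℝ}
    {E Et U : 𝔼 → Matrix (Fin n1 ⊕ Fin n2) (Fin n1 ⊕ Fin n2) ℝ} {z : 𝔼 → Fin n1 ⊕ Fin n2 → ℝ}
    {φ ψ : 𝔼 → 𝔼} (hψ : ContDiffOn ℝ 1 ψ X) (hψmap : MapsTo ψ X Y) (hφψ : LeftInvOn φ ψ X)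
    (hφ : ∀ y ∈ Y, DifferentiableAt ℝ φ y) (hU : ContinuousOn U Y)
    (hUinv : ∀ y ∈ Y, IsUnit (U y).det) (hEt : ∀ y ∈ Y, (U y)ᵀ * E (φ y) * jacP φ y = Et y)
    {Ebar : 𝔼 → 𝔼 → Matrix (Fin n1 ⊕ Fin n2) (Fin n1 ⊕ Fin n2) ℝ}
    {zbar : 𝔼 → 𝔼 → Fin n1 ⊕ Fin n2 → ℝ}
    (h : IsDiscreteGradientPairProd Y (H ∘ φ) Et (fun y => (U y)⁻¹ *ᵥ z (φ y)) Ebar zbar) :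
    IsDiscreteGradientPairProd X H E z
      (fun x x' => ((U (ψ x))ᵀ)⁻¹ * Ebar (ψ x) (ψ x') * discreteJacP ψ x x')
      (fun x x' => U (ψ x) *ᵥ zbar (ψ x) (ψ x')) := by
  obtain ⟨hEbar, hzbar, hdisc, hEdiag, hzdiag⟩ := h
  have hψψ : ContinuousOn (fun p : 𝔼 × 𝔼 => (ψ p.1, ψ p.2)) (X ×ˢ X) :=
    (hψ.continuousOn.comp continuousOn_fst fun p hp => hp.1).prodMk
      (hψ.continuousOn.comp continuousOn_snd fun p hp => hp.2)
  have hψψmap : MapsTo (fun p : 𝔼 × 𝔼 => (ψ p.1, ψ p.2)) (X ×ˢ X) (Y ×ˢ Y) :=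
    fun p hp => ⟨hψmap hp.1, hψmap hp.2⟩
  have hUψ : ContinuousOn (fun p : 𝔼 × 𝔼 => U (ψ p.1)) (X ×ˢ X) :=
    hU.comp (continuous_fst.comp_continuousOn hψψ) fun p hp => (hψψmap hp).1
  have hUψinv : ContinuousOn (fun p : 𝔼 × 𝔼 => ((U (ψ p.1))ᵀ)⁻¹) (X ×ˢ X) :=
    (continuous_id.matrix_transpose.comp_continuousOn hUψ).matrix_inv fun p hp => by
      simpa using hUinv _ (hψmap hp.1)
  refine ⟨?_, ?_, fun x hx x' hx' => ?_, fun x hx => ?_, fun x hx => ?_⟩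
  · exact (hUψinv.mul (hEbar.comp hψψ hψψmap)).mul (continuousOn_discreteJacP hX hψ)
  · exact (continuous_fst.matrix_mulVec continuous_snd).comp_continuousOn
      (hUψ.prodMk (hzbar.comp hψψ hψψmap))
  · change (U (ψ x) *ᵥ zbar (ψ x) (ψ x')) ⬝ᵥ
      ((((U (ψ x))ᵀ)⁻¹ * Ebar (ψ x) (ψ x') * discreteJacP ψ x x') *ᵥ flatP (x' - x)) = _
    rw [← mulVec_mulVec, discreteJacP_mulVec, ← mulVec_mulVec, dotProduct_comm,
      inv_transpose_mulVec_dotProduct_mulVec (hUinv _ (hψmap hx)), dotProduct_comm]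
    refine (hdisc _ (hψmap hx) _ (hψmap hx')).trans ?_
    simp [hφψ hx, hφψ hx']
  · dsimp only
    rw [discreteJacP_self, hEdiag _ (hψmap hx), ← hEt _ (hψmap hx), hφψ hx, ← Matrix.mul_assoc,
      ← Matrix.mul_assoc, nonsing_inv_mul _ (by simpa using hUinv _ (hψmap hx)), Matrix.one_mul,
      Matrix.mul_assoc, jacP_mul_jacP_of_leftInvOn hX hφψ hx (hφ _ (hψmap hx))
        ((hψ.contDiffAt (hX.mem_nhds hx)).differentiableAt one_ne_zero), Matrix.mul_one]
  · dsimp only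
    rw [hzdiag _ (hψmap hx), mulVec_mulVec, mul_nonsing_inv _ (hUinv _ (hψmap hx)), one_mulVec,
      hφψ hx]

end DiscreteGradients

theorem discrete_gradient_pair_from_semiExplicit_general {n1 n2 : ℕ}
    (X : Set ((Fin n1 → ℝ) × (Fin n2 → ℝ))) (hX : IsOpen X)
    (H : ((Fin n1 → ℝ) × (Fin n2 → ℝ)) → ℝ) (hH : ContDiffOn ℝ 1 H X)
    (E : ((Fin n1 → ℝ) × (Fin n2 → ℝ)) → Matrix (Fin n1 ⊕ Fin n2) (Fin n1 ⊕ Fin n2) ℝ)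
    (z : ((Fin n1 → ℝ) × (Fin n2 → ℝ)) → (Fin n1 ⊕ Fin n2 → ℝ))
    (hzcont : ContinuousOn z X)
    (hgradpair : ∀ x ∈ X, (E x)ᵀ.mulVec (z x) = gradP H x)
    -- an invertible system transformation mapping into semi-explicit form
    (Xt1 : Set (Fin n1 → ℝ)) (Xt2 : Set (Fin n2 → ℝ))
    (hXt1 : IsOpen Xt1) (hXt2 : IsOpen Xt2) (hXt2conv : Convex ℝ Xt2)
    (φ ψ : ((Fin n1 → ℝ) × (Fin n2 → ℝ)) → ((Fin n1 → ℝ) × (Fin n2 → ℝ)))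
    (hφ : ContDiffOn ℝ 1 φ (Xt1 ×ˢ Xt2)) (hφmap : Set.MapsTo φ (Xt1 ×ˢ Xt2) X)
    (hψ : ContDiffOn ℝ 1 ψ X) (hψmap : Set.MapsTo ψ X (Xt1 ×ˢ Xt2))
    (hφψ : ∀ x ∈ X, φ (ψ x) = x)
    (U : ((Fin n1 → ℝ) × (Fin n2 → ℝ)) → Matrix (Fin n1 ⊕ Fin n2) (Fin n1 ⊕ Fin n2) ℝ)
    (hUcont : ContinuousOn U (Xt1 ×ˢ Xt2))
    (hUinv : ∀ xt ∈ Xt1 ×ˢ Xt2, IsUnit (U xt).det)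
    -- the transformed gradient pair is semi-explicit
    (E11t : ((Fin n1 → ℝ) × (Fin n2 → ℝ)) → Matrix (Fin n1) (Fin n1) ℝ)
    (hE11tcont : ContinuousOn E11t (Xt1 ×ˢ Xt2))
    (hE11tinv : ∀ xt ∈ Xt1 ×ˢ Xt2, IsUnit (E11t xt).det)
    (hsemi : ∀ xt ∈ Xt1 ×ˢ Xt2,
      (U xt)ᵀ * E (φ xt) * jacP φ xt
        = (Matrix.fromBlocks (E11t xt) 0 0 0 :
            Matrix (Fin n1 ⊕ Fin n2) (Fin n1 ⊕ Fin n2) ℝ)) :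
    ∃ Ebar zbar, IsDiscreteGradientPairProd X H E z Ebar zbar := by
  have hφdiff : ∀ y ∈ Xt1 ×ˢ Xt2, DifferentiableAt ℝ φ y := fun y hy =>
    (hφ.contDiffAt ((hXt1.prod hXt2).mem_nhds hy)).differentiableAt one_ne_zero
  have hgradt : ∀ y ∈ Xt1 ×ˢ Xt2,
      (fromBlocks (E11t y) 0 0 0)ᵀ *ᵥ ((U y)⁻¹ *ᵥ z (φ y)) = gradP (H ∘ φ) y := by
    intro y hy
    have hHdiff : DifferentiableAt ℝ H (φ y) :=
      (hH.contDiffAt (hX.mem_nhds (hφmap hy))).differentiableAt one_ne_zero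
    rw [← hsemi y hy, transpose_mul_mulVec_inv_mulVec (hUinv y hy), hgradpair _ (hφmap hy),
      gradP_comp hHdiff (hφdiff y hy)]
  have hzt : ContinuousOn (fun y => (U y)⁻¹ *ᵥ z (φ y)) (Xt1 ×ˢ Xt2) :=
    (continuous_fst.matrix_mulVec continuous_snd).comp_continuousOn
      ((hUcont.matrix_inv hUinv).prodMk (hzcont.comp hφ.continuousOn hφmap))
  obtain ⟨Ebar, zbar, hpair⟩ := exists_isDiscreteGradientPairProd_of_semiExplicit hXt1 hXt2
    hXt2conv (hH.comp hφ hφmap) hE11tcont hE11tinv hzt hgradt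
  exact ⟨_, _, hpair.of_transform hX hψ hψmap hφψ hφdiff hUcont hUinv hsemi⟩

/-- if a gradient pair can be transformed into a semi-explicit one by an
invertible system transformation, then it admits a discrete gradient pair. -/
theorem discrete_gradient_pair_from_semiExplicit {n1 n2 : ℕ}
    (X : Set ((Fin n1 → ℝ) × (Fin n2 → ℝ))) (hX : IsOpen X)
    (H : ((Fin n1 → ℝ) × (Fin n2 → ℝ)) → ℝ) (hH : ContDiffOn ℝ 1 H X)
    (E : ((Fin n1 → ℝ) × (Fin n2 → ℝ)) → Matrix (Fin n1 ⊕ Fin n2) (Fin n1 ⊕ Fin n2) ℝ)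
    (z : ((Fin n1 → ℝ) × (Fin n2 → ℝ)) → (Fin n1 ⊕ Fin n2 → ℝ))
    (hEcont : ContinuousOn E X) (hzcont : ContinuousOn z X)
    (hgradpair : ∀ x ∈ X, (E x)ᵀ.mulVec (z x) = gradP H x)
    -- an invertible system transformation mapping into semi-explicit form
    (Xt1 : Set (Fin n1 → ℝ)) (Xt2 : Set (Fin n2 → ℝ))
    (hXt1 : IsOpen Xt1) (hXt2 : IsOpen Xt2) (hXt2conv : Convex ℝ Xt2)
    (φ ψ : ((Fin n1 → ℝ) × (Fin n2 → ℝ)) → ((Fin n1 → ℝ) × (Fin n2 → ℝ)))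
    (hφ : ContDiffOn ℝ 1 φ (Xt1 ×ˢ Xt2)) (hφmap : Set.MapsTo φ (Xt1 ×ˢ Xt2) X)
    (hψ : ContDiffOn ℝ 1 ψ X) (hψmap : Set.MapsTo ψ X (Xt1 ×ˢ Xt2))
    (hψφ : ∀ xt ∈ Xt1 ×ˢ Xt2, ψ (φ xt) = xt) (hφψ : ∀ x ∈ X, φ (ψ x) = x)
    (U : ((Fin n1 → ℝ) × (Fin n2 → ℝ)) → Matrix (Fin n1 ⊕ Fin n2) (Fin n1 ⊕ Fin n2) ℝ)
    (hUcont : ContinuousOn U (Xt1 ×ˢ Xt2))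
    (hUinv : ∀ xt ∈ Xt1 ×ˢ Xt2, IsUnit (U xt).det)
    -- the transformed gradient pair is semi-explicit
    (E11t : ((Fin n1 → ℝ) × (Fin n2 → ℝ)) → Matrix (Fin n1) (Fin n1) ℝ)
    (hE11tcont : ContinuousOn E11t (Xt1 ×ˢ Xt2))
    (hE11tinv : ∀ xt ∈ Xt1 ×ˢ Xt2, IsUnit (E11t xt).det)
    (hsemi : ∀ xt ∈ Xt1 ×ˢ Xt2,
      (U xt)ᵀ * E (φ xt) * jacP φ xt
        = (Matrix.fromBlocks (E11t xt) 0 0 0 :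
            Matrix (Fin n1 ⊕ Fin n2) (Fin n1 ⊕ Fin n2) ℝ)) :
    ∃ Ebar zbar, IsDiscreteGradientPairProd X H E z Ebar zbar :=
  discrete_gradient_pair_from_semiExplicit_general X hX H hH E z hzcont hgradpair Xt1 Xt2 hXt1 hXt2
    hXt2conv φ ψ hφ hφmap hψ hψmap hφψ U hUcont hUinv E11t hE11tcont hE11tinv hsemi
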